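/- arXiv:2005.07050 — 10 statements merged into one kernel-verified Lean document; each statement's English description precedes it below -/
import Mathlib

section
/- Let ⟨S, F⟩ be an F-system. A function L : S → {T, F, U} is a classical labelling if and only if L(x) ≠ U for all x ∈ S and the set A = {x ∈ S : L(x) = T} is a conglomerate and L(x) = F for all x ∈ S \ A. -/
/-- Truth labels: True, False, Undetermined. -/
inductive Label where
  | T : Label
  | F : Label
  | U : Label
  deriving DecidableEq

variable {S : Type*}

/-- F→(x): the sentences whose falsity x affirms. -/
def FOut (F : S → S → Prop) (x : S) : Set S := {y | F x y}

/-- F←(x): the sentences affirming the falsity of x. -/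
def FIn (F : S → S → Prop) (x : S) : Set S := {y | F y x}

/-- F→(A). -/
def FOutSet (F : S → S → Prop) (A : Set S) : Set S := ⋃ x ∈ A, FOut F x

/-- F←(A). -/
def FInSet (F : S → S → Prop) (A : Set S) : Set S := ⋃ x ∈ A, FIn F x

/-- A sink is a node with no outgoing edges. -/
def IsSink (F : S → S → Prop) (x : S) : Prop := FOut F x = ∅

/-- sinks(A): the sinks belonging to A. -/
def sinks (F : S → S → Prop) (A : Set S) : Set S := {x ∈ A | IsSink F x}

/-- A labelling: for every non-sink x, L x = F iff some z ∈ F→(x) has L z = T,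
and L x = T iff every z ∈ F→(x) has L z = F. -/
def IsLabelling (F : S → S → Prop) (L : S → Label) : Prop :=
  ∀ x, ¬ IsSink F x →
    ((L x = Label.F ↔ ∃ z ∈ FOut F x, L z = Label.T) ∧
     (L x = Label.T ↔ ∀ z ∈ FOut F x, L z = Label.F))

/-- A labelling is classical iff no sentence gets the label U. -/
def IsClassical (L : S → Label) : Prop := ∀ x, L x ≠ Label.U

/-- A conglomerate: (1) F←(A) ⊆ S \ A, (2) (S \ A) \ sinks(S) ⊆ F←(A). -/
def Conglomerate (F : S → S → Prop) (A : Set S) : Prop :=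
  FInSet F A ⊆ Aᶜ ∧ Aᶜ \ sinks F Set.univ ⊆ FInSet F A

/-- A local conglomerate: (1) F←(A) ⊆ S \ A, (2) F→(A) \ sinks(S) ⊆ F←(A). -/
def LocalConglomerate (F : S → S → Prop) (A : Set S) : Prop :=
  FInSet F A ⊆ Aᶜ ∧ FOutSet F A \ sinks F Set.univ ⊆ FInSet F A

/-- The operator φ on pairs of subsets of S. -/
def phi (F : S → S → Prop) (p : Set S × Set S) : Set S × Set S :=
  (sinks F p.1 ∪ {x | FOut F x ≠ ∅ ∧ FOut F x ⊆ p.2},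
   sinks F p.2 ∪ {x | FOut F x ∩ p.1 ≠ ∅})

/-- The order on pairs: componentwise inclusion. -/
def PairLe (p q : Set S × Set S) : Prop := p.1 ⊆ q.1 ∧ p.2 ⊆ q.2

/-- An F-system is paradoxical iff it has no classical labelling. -/
def IsParadoxical (F : S → S → Prop) : Prop :=
  ¬ ∃ L : S → Label, IsLabelling F L ∧ IsClassical L

/-- x is a referential contradiction iff every classical labelling labels it F. -/
def RefContradiction (F : S → S → Prop) (x : S) : Prop :=
  ∀ L : S → Label, IsLabelling F L → IsClassical L → L x = Label.F

/-- x is a referential tautology iff every classical labelling labels it T. -/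
def RefTautology (F : S → S → Prop) (x : S) : Prop :=
  ∀ L : S → Label, IsLabelling F L → IsClassical L → L x = Label.T

/-- L is a classical labelling iff L(x) ≠ U for all x,
A = {x : L x = T} is a conglomerate and L(x) = F for all x ∉ A. -/
theorem classical_labelling_iff_conglomerate (F : S → S → Prop) (L : S → Label) :
    (IsLabelling F L ∧ IsClassical L) ↔
      (IsClassical L ∧ Conglomerate F {x | L x = Label.T} ∧
        ∀ x ∈ ({x | L x = Label.T} : Set S)ᶜ, L x = Label.F) := by
  have notT : ∀ x, IsClassical L → L x ≠ Label.T → L x = Label.F := by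
    intro x hc h
    cases hx : L x with
    | T => exact absurd hx h
    | F => rfl
    | U => exact absurd hx (hc x)
  constructor
  · rintro ⟨hl, hc⟩
    refine ⟨hc, ⟨?_, ?_⟩, fun x hx => notT x hc hx⟩
    · rintro y hy
      simp only [FInSet, Set.mem_iUnion, FIn, Set.mem_setOf_eq] at hy
      obtain ⟨z, hz, hFyz⟩ := hy
      have hns : ¬ IsSink F y := by
        intro hs
        have : z ∈ FOut F y := hFyz
        rw [hs] at this; exact this
      have := ((hl y hns).1).2 ⟨z, hFyz, hz⟩
      simp only [Set.mem_compl_iff, Set.mem_setOf_eq]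
      rw [this]; simp
    · rintro x ⟨hx, hns⟩
      simp only [sinks, Set.mem_setOf_eq, Set.mem_univ, true_and] at hns
      simp only [Set.mem_compl_iff, Set.mem_setOf_eq] at hx
      have hxF : L x = Label.F := notT x hc hx
      obtain ⟨z, hz, hzT⟩ := ((hl x hns).1).1 hxF
      simp only [FInSet, Set.mem_iUnion, FIn, Set.mem_setOf_eq]
      exact ⟨z, hzT, hz⟩
  · rintro ⟨hc, ⟨h1, h2⟩, hF⟩
    refine ⟨?_, hc⟩
    intro x hns
    constructor
    · constructor
      · intro hxF
        have hx : x ∈ ({x | L x = Label.T} : Set S)ᶜ := by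
          simp only [Set.mem_compl_iff, Set.mem_setOf_eq]; rw [hxF]; simp
        have : x ∈ FInSet F {x | L x = Label.T} := h2 ⟨hx, by simp [sinks, hns]⟩
        simp only [FInSet, Set.mem_iUnion, FIn, Set.mem_setOf_eq] at this
        obtain ⟨z, hzT, hFxz⟩ := this
        exact ⟨z, hFxz, hzT⟩
      · rintro ⟨z, hz, hzT⟩
        have : x ∈ FInSet F {x | L x = Label.T} := by
          simp only [FInSet, Set.mem_iUnion, FIn, Set.mem_setOf_eq]
          exact ⟨z, hzT, hz⟩
        have hx := h1 this
        simp only [Set.mem_compl_iff, Set.mem_setOf_eq] at hx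
        exact notT x hc hx
    · constructor
      · intro hxT z hz
        apply notT z hc
        intro hzT
        have : x ∈ FInSet F {x | L x = Label.T} := by
          simp only [FInSet, Set.mem_iUnion, FIn, Set.mem_setOf_eq]
          exact ⟨z, hzT, hz⟩
        have hx := h1 this
        simp only [Set.mem_compl_iff, Set.mem_setOf_eq] at hx
        exact absurd hxT hx
      · intro hall
        by_contra hxT
        have hx : x ∈ ({x | L x = Label.T} : Set S)ᶜ := hxT
        have : x ∈ FInSet F {x | L x = Label.T} := h2 ⟨hx, by simp [sinks, hns]⟩
        simp only [FInSet, Set.mem_iUnion, FIn, Set.mem_setOf_eq] at this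
        obtain ⟨z, hzT, hFxz⟩ := this
        have := hall z hFxz
        rw [hzT] at this; exact absurd this (by simp)
end

section
/- An F-system ⟨S, F⟩ is paradoxical (i.e. has no classical labelling) if and only if it has no conglomerate. -/
variable {S : Type*}

/-- An F-system is paradoxical iff it has no conglomerate. -/
theorem paradoxical_iff_no_conglomerate (F : S → S → Prop) :
    IsParadoxical F ↔ ¬ ∃ A : Set S, Conglomerate F A := by

  unfold IsParadoxical
  apply not_congr
  constructor
  · rintro ⟨L, hL, hC⟩
    refine ⟨{x | L x = Label.T}, ?_, ?_⟩
    · rintro y hy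
      simp only [FInSet, FIn, Set.mem_iUnion] at hy
      obtain ⟨x, hxT, hyx⟩ := hy
      intro hyT
      have hns : ¬ IsSink F y := by
        intro hs
        have : x ∈ FOut F y := hyx
        rw [hs] at this
        exact this
      have hF : L y = Label.F := ((hL y hns).1).2 ⟨x, hyx, hxT⟩
      simp only [Set.mem_setOf_eq] at hyT
      rw [hyT] at hF
      exact Label.noConfusion hF
    · rintro x ⟨hxc, hxs⟩
      simp only [sinks, Set.mem_setOf_eq, Set.mem_univ, true_and] at hxs
      have hxF : L x = Label.F := by
        have := hC x
        cases h : L x with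
        | T => exact absurd h hxc
        | F => rfl
        | U => exact absurd h this
      obtain ⟨z, hz, hzT⟩ := ((hL x hxs).1).1 hxF
      simp only [FInSet, FIn, Set.mem_iUnion]
      exact ⟨z, hzT, hz⟩
  · rintro ⟨A, h1, h2⟩
    classical
    refine ⟨fun x => if x ∈ A then Label.T else Label.F, ?_, ?_⟩
    · intro x hns
      have key : ∀ z, F x z → z ∉ A → False → True := fun _ _ _ _ => trivial
      by_cases hx : x ∈ A
      · have noT : ∀ z ∈ FOut F x, z ∉ A := by
          intro z hz hzA
          have : x ∈ FInSet F A := by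
            simp only [FInSet, FIn, Set.mem_iUnion]
            exact ⟨z, hzA, hz⟩
          exact h1 this hx
        constructor
        · simp only [hx, if_true]
          constructor
          · intro h; exact Label.noConfusion h
          · rintro ⟨z, hz, hzT⟩
            exfalso
            have := noT z hz
            simp only [this, if_neg] at hzT
            exact Label.noConfusion hzT
        · simp only [hx, if_true]
          constructor
          · intro _ z hz
            simp [noT z hz]
          · intro _; trivial
      · have hxin : x ∈ FInSet F A := by
          apply h2
          refine ⟨hx, ?_⟩
          simp only [sinks, Set.mem_setOf_eq, Set.mem_univ, true_and]
          exact hns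
        simp only [FInSet, FIn, Set.mem_iUnion] at hxin
        obtain ⟨z, hzA, hxz⟩ := hxin
        constructor
        · simp only [hx, if_false]
          constructor
          · intro _
            exact ⟨z, hxz, by simp [hzA]⟩
          · intro _; trivial
        · simp only [hx, if_false]
          constructor
          · intro h; exact Label.noConfusion h
          · intro h
            have := h z hxz
            simp only [hzA, if_true] at this
            exact Label.noConfusion this
    · intro x
      by_cases hx : x ∈ A <;> simp [hx]
end

section
/- The F-system ⟨ℕ, {(k, m) : k < m}⟩ (modelling Yablo's paradox) has no classical labelling, i.e. it is paradoxical. -/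
variable {S : Type*}

/-- The F-system ⟨ℕ, {(k,m) : k < m}⟩ (Yablo's paradox) is paradoxical. -/
theorem yablo_paradoxical : IsParadoxical (fun k m : ℕ => k < m) := by
  rintro ⟨L, hL, hC⟩
  have hns : ∀ n : ℕ, ¬ IsSink (fun k m : ℕ => k < m) n := by
    intro n h
    have : n + 1 ∈ FOut (fun k m : ℕ => k < m) n := Nat.lt_succ_self n
    rw [h] at this; exact this
  have hT : ∀ n : ℕ, L n ≠ Label.T := by
    intro n hn
    have h1 := ((hL n (hns n)).2).1 hn
    have hF : L (n+1) = Label.F := h1 (n+1) (Nat.lt_succ_self n)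
    obtain ⟨z, hz, hzT⟩ := ((hL (n+1) (hns (n+1))).1).1 hF
    have := h1 z (Nat.lt_trans (Nat.lt_succ_self n) hz)
    rw [this] at hzT; exact Label.noConfusion hzT
  have hF0 : L 0 = Label.F := by
    cases h : L 0 with
    | T => exact absurd h (hT 0)
    | F => rfl
    | U => exact absurd h (hC 0)
  obtain ⟨z, _, hzT⟩ := ((hL 0 (hns 0)).1).1 hF0
  exact hT z hzT
end

section
/- For every ground base (S₀⁺, S₀⁻) of an F-system ⟨S, F⟩, there exists a fixed point (S⁺, S⁻) of φ with S₀⁺ ⊆ S⁺ and S₀⁻ ⊆ S⁻ that is least among all such fixed points: for every fixed point (S'⁺, S'⁻) of φ with S₀⁺ ⊆ S'⁺ and S₀⁻ ⊆ S'⁻, one has S⁺ ⊆ S'⁺ and S⁻ ⊆ S'⁻. -/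
variable {S : Type*}

/-- For every ground base there is a least fixed point of φ above it. -/
theorem least_fixed_point_over_ground_base (F : S → S → Prop) (S0p S0m : Set S)
    (hu : S0p ∪ S0m = sinks F Set.univ) (hd : S0p ∩ S0m = ∅) :
    ∃ p : Set S × Set S, phi F p = p ∧ S0p ⊆ p.1 ∧ S0m ⊆ p.2 ∧
      ∀ q : Set S × Set S, phi F q = q → S0p ⊆ q.1 → S0m ⊆ q.2 →
        p.1 ⊆ q.1 ∧ p.2 ⊆ q.2 := by
  have hmono : Monotone (phi F) := by
    intro p q hpq
    constructor
    · rintro x (hx | hx)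
      · exact Or.inl ⟨hpq.1 hx.1, hx.2⟩
      · exact Or.inr ⟨hx.1, hx.2.trans hpq.2⟩
    · rintro x (hx | hx)
      · exact Or.inl ⟨hpq.2 hx.1, hx.2⟩
      · refine Or.inr ?_
        simp only [Set.mem_setOf_eq, ← Set.nonempty_iff_ne_empty] at hx ⊢
        exact hx.mono (Set.inter_subset_inter_right _ hpq.1)
  set base : Set S × Set S := (S0p, S0m) with hbase
  have hgmono : Monotone (fun p => phi F p ⊔ base) := fun p q h =>
    sup_le_sup_right (hmono h) base
  set g : (Set S × Set S) →o (Set S × Set S) := ⟨fun p => phi F p ⊔ base, hgmono⟩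
  set p := OrderHom.lfp g with hp
  have hfix : phi F p ⊔ base = p := OrderHom.map_lfp g
  have hbp : base ≤ p := le_of_le_of_eq le_sup_right hfix
  have hbphib : base ≤ phi F base := by
    constructor
    · intro x hx
      have hs : x ∈ sinks F Set.univ := hu ▸ Or.inl hx
      exact Or.inl ⟨hx, hs.2⟩
    · intro x hx
      have hs : x ∈ sinks F Set.univ := hu ▸ Or.inr hx
      exact Or.inl ⟨hx, hs.2⟩
  have hbphip : base ≤ phi F p := hbphib.trans (hmono hbp)
  have hfixp : phi F p = p := (sup_eq_left.mpr hbphip).symm.trans hfix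
  refine ⟨p, hfixp, hbp.1, hbp.2, ?_⟩
  intro q hq hq1 hq2
  have hbq : base ≤ q := ⟨hq1, hq2⟩
  have : g q ≤ q := by
    show phi F q ⊔ base ≤ q
    rw [hq]
    exact sup_le le_rfl hbq
  exact OrderHom.lfp_le g this
end

section
/- Let ⟨S, F⟩ be an F-system. A subset A ⊆ S is a conglomerate if and only if the pair (A, S \ A) is a complete and consistent fixed point of φ. -/
variable {S : Type*}

/-- A is a conglomerate iff (A, S \ A) is a complete and consistent
fixed point of φ. -/
theorem conglomerate_iff_complete_consistent_fixed_point (F : S → S → Prop) (A : Set S) :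
    Conglomerate F A ↔
      (phi F (A, Aᶜ) = (A, Aᶜ) ∧ A ∪ Aᶜ = Set.univ ∧ A ∩ Aᶜ = ∅) := by
  constructor
  · rintro ⟨h1, h2⟩
    refine ⟨?_, Set.union_compl_self A, Set.inter_compl_self A⟩
    have key1 : ∀ x ∈ A, FOut F x ⊆ Aᶜ := by
      intro x hx z hz
      intro hzA
      exact h1 (Set.mem_biUnion hzA hz) hx
    have key2 : ∀ x ∈ Aᶜ, ¬ IsSink F x → (FOut F x ∩ A).Nonempty := by
      intro x hx hns
      have : x ∈ FInSet F A := h2 ⟨hx, fun h => hns h.2⟩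
      obtain ⟨z, hzA, hz⟩ := Set.mem_iUnion₂.mp this
      exact ⟨z, hz, hzA⟩
    unfold phi
    simp only [Prod.mk.injEq]
    constructor
    · ext x
      simp only [Set.mem_union, Set.mem_setOf_eq, sinks, IsSink]
      constructor
      · rintro (⟨hx, _⟩ | ⟨hne, hsub⟩)
        · exact hx
        · by_contra hxA
          obtain ⟨z, hz, hzA⟩ := key2 x hxA (by simpa [IsSink] using hne)
          exact hsub hz hzA
      · intro hx
        by_cases hs : FOut F x = ∅
        · exact Or.inl ⟨hx, hs⟩
        · exact Or.inr ⟨hs, key1 x hx⟩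
    · ext x
      simp only [Set.mem_union, Set.mem_setOf_eq, sinks, IsSink]
      constructor
      · rintro (⟨hx, _⟩ | hne)
        · exact hx
        · obtain ⟨z, hz1, hz2⟩ := Set.nonempty_iff_ne_empty.mpr hne
          intro hxA
          exact key1 x hxA hz1 hz2
      · intro hx
        by_cases hs : FOut F x = ∅
        · exact Or.inl ⟨hx, hs⟩
        · refine Or.inr (Set.nonempty_iff_ne_empty.mp ?_)
          exact key2 x hx (by simpa [IsSink] using hs)
  · rintro ⟨hfix, -, -⟩
    have h1 : (sinks F A ∪ {x | FOut F x ≠ ∅ ∧ FOut F x ⊆ Aᶜ}) = A :=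
      congrArg Prod.fst hfix
    have h2 : (sinks F Aᶜ ∪ {x | FOut F x ∩ A ≠ ∅}) = Aᶜ :=
      congrArg Prod.snd hfix
    constructor
    · intro y hy
      obtain ⟨x, hxA, hyx⟩ := Set.mem_iUnion₂.mp hy
      have : y ∈ sinks F Aᶜ ∪ {x | FOut F x ∩ A ≠ ∅} := by
        right
        exact Set.nonempty_iff_ne_empty.mp ⟨x, hyx, hxA⟩
      rw [h2] at this
      exact this
    · rintro x ⟨hxc, hns⟩
      have hns' : ¬ IsSink F x := fun h => hns ⟨Set.mem_univ x, h⟩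
      have : x ∈ sinks F Aᶜ ∪ {x | FOut F x ∩ A ≠ ∅} := by rw [h2]; exact hxc
      rcases this with ⟨_, hs⟩ | hne
      · exact absurd hs hns'
      · obtain ⟨z, hz, hzA⟩ := Set.nonempty_iff_ne_empty.mpr hne
        exact Set.mem_biUnion hzA hz
end

section
/- Let ⟨S, F⟩ be a non-paradoxical F-system. Then x ∈ S is a referential contradiction if and only if x ∉ A for every conglomerate A. -/
variable {S : Type*}

lemma mem_FInSet {F : S → S → Prop} {A : Set S} {y : S} :
    y ∈ FInSet F A ↔ ∃ z ∈ A, F y z := by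
  simp [FInSet, FIn]

lemma conglomerate_of_labelling {F : S → S → Prop} {L : S → Label}
    (hL : IsLabelling F L) (hC : IsClassical L) :
    Conglomerate F {y | L y = Label.T} := by
  constructor
  · intro y hy
    obtain ⟨z, hz, hyz⟩ := mem_FInSet.mp hy
    have hns : ¬ IsSink F y := by
      intro h
      have : z ∈ (∅ : Set S) := h ▸ hyz
      exact this
    have hF : L y = Label.F := (hL y hns).1.mpr ⟨z, hyz, hz⟩
    simp [hF]
  · intro y hy
    simp only [Set.mem_diff, Set.mem_compl_iff, Set.mem_setOf_eq, sinks] at hy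
    obtain ⟨hyT, hys⟩ := hy
    have hns : ¬ IsSink F y := fun h => hys ⟨trivial, h⟩
    have hF : L y = Label.F := by
      cases h : L y with
      | T => exact absurd h hyT
      | F => rfl
      | U => exact absurd h (hC y)
    obtain ⟨z, hz, hzT⟩ := (hL y hns).1.mp hF
    exact mem_FInSet.mpr ⟨z, hzT, hz⟩

open Classical in
lemma labelling_of_conglomerate {F : S → S → Prop} {A : Set S}
    (hA : Conglomerate F A) :
    IsLabelling F (fun y => if y ∈ A then Label.T else Label.F) := by
  classical
  obtain ⟨h1, h2⟩ := hA
  intro x hns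
  have key : x ∈ A → ∀ z ∈ FOut F x, z ∉ A := by
    intro hx z hz hzA
    have : x ∈ FInSet F A := mem_FInSet.mpr ⟨z, hzA, hz⟩
    exact h1 this hx
  have key2 : x ∉ A → ∃ z ∈ FOut F x, z ∈ A := by
    intro hx
    have : x ∈ FInSet F A := by
      apply h2
      refine ⟨hx, ?_⟩
      simp only [sinks, Set.mem_setOf_eq, not_and]
      intro _
      exact hns
    obtain ⟨z, hzA, hxz⟩ := mem_FInSet.mp this
    exact ⟨z, hxz, hzA⟩
  constructor
  · constructor
    · intro hF
      have hx : x ∉ A := by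
        intro h; simp [h] at hF
      obtain ⟨z, hz, hzA⟩ := key2 hx
      exact ⟨z, hz, by simp [hzA]⟩
    · rintro ⟨z, hz, hzT⟩
      have hzA : z ∈ A := by
        by_contra h; simp [h] at hzT
      have hx : x ∉ A := fun h => key h z hz hzA
      simp [hx]
  · constructor
    · intro hT
      have hx : x ∈ A := by
        by_contra h; simp [h] at hT
      intro z hz
      have := key hx z hz
      simp [this]
    · intro hall
      by_contra hT
      have hx : x ∉ A := by
        intro h
        simp [h] at hT
      obtain ⟨z, hz, hzA⟩ := key2 hx
      have := hall z hz
      simp [hzA] at this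

/-- In a non-paradoxical F-system, x is a referential contradiction iff
x belongs to no conglomerate. -/
theorem refContradiction_iff_not_mem_conglomerates (F : S → S → Prop)
    (hnp : ¬ IsParadoxical F) (x : S) :
    RefContradiction F x ↔ ∀ A : Set S, Conglomerate F A → x ∉ A := by
  classical
  constructor
  · intro hrc A hA hxA
    have hL := labelling_of_conglomerate hA
    have hC : IsClassical (fun y => if y ∈ A then Label.T else Label.F) := by
      intro y; by_cases h : y ∈ A <;> simp [h]
    have := hrc _ hL hC
    simp [hxA] at this
  · intro h L hL hC
    have hcong := conglomerate_of_labelling hL hC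
    have hx := h _ hcong
    simp only [Set.mem_setOf_eq] at hx
    cases hLx : L x with
    | T => exact absurd hLx hx
    | F => rfl
    | U => exact absurd hLx (hC x)
end

section
/- Let ⟨S, F⟩ be a non-paradoxical F-system. Then x ∈ S is a referential tautology if and only if x ∈ A for every conglomerate A. -/
variable {S : Type*}

/-- In a non-paradoxical F-system, x is a referential tautology iff
x belongs to every conglomerate. -/
theorem refTautology_iff_mem_all_conglomerates (F : S → S → Prop)
    (hnp : ¬ IsParadoxical F) (x : S) :
    RefTautology F x ↔ ∀ A : Set S, Conglomerate F A → x ∈ A := by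
  classical
  have memFIn : ∀ (A : Set S) (y : S), y ∈ FInSet F A ↔ ∃ z ∈ A, F y z := by
    intro A y
    simp [FInSet, FIn, Set.mem_iUnion]
  constructor
  · intro ht A hA
    set L : S → Label := fun y => if y ∈ A then Label.T else Label.F with hLdef
    have hlab : IsLabelling F L := by
      intro y hy
      by_cases hyA : y ∈ A
      · have hsucc : ∀ z, F y z → z ∉ A := by
          intro z hFz hzA
          exact hA.1 ((memFIn A y).mpr ⟨z, hzA, hFz⟩) hyA
        constructor
        · constructor
          · intro h; simp [hLdef, hyA] at h
          · rintro ⟨z, hz, hzT⟩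
            have hzA : z ∈ A := by
              by_contra hc; simp [hLdef, hc] at hzT
            exact absurd hzA (hsucc z hz)
        · constructor
          · intro _ z hz
            simp [hLdef, hsucc z hz]
          · intro _; simp [hLdef, hyA]
      · have hmem : y ∈ FInSet F A := by
          apply hA.2
          refine ⟨hyA, ?_⟩
          simp [sinks, IsSink]
          intro h
          exact hy h
        obtain ⟨z, hzA, hFz⟩ := (memFIn A y).mp hmem
        constructor
        · constructor
          · intro _; exact ⟨z, hFz, by simp [hLdef, hzA]⟩
          · intro _; simp [hLdef, hyA]
        · constructor
          · intro h; simp [hLdef, hyA] at h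
          · intro h
            have := h z hFz
            simp [hLdef, hzA] at this
    have hT := ht L hlab (by intro y; by_cases hy : y ∈ A <;> simp [hLdef, hy])
    by_contra hx
    simp [hLdef, hx] at hT
  · intro hall L hL hC
    set A : Set S := {y | L y = Label.T} with hAdef
    have hcong : Conglomerate F A := by
      constructor
      · intro y hy
        obtain ⟨z, hzA, hFz⟩ := (memFIn A y).mp hy
        have hsink : ¬ IsSink F y := by
          simp [IsSink, FOut, Set.eq_empty_iff_forall_notMem]
          exact ⟨z, hFz⟩
        have hF : L y = Label.F := (hL y hsink).1.mpr ⟨z, hFz, hzA⟩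
        simp [hAdef, hF]
      · intro y hy
        obtain ⟨hyA, hyS⟩ := hy
        have hsink : ¬ IsSink F y := by
          simpa [sinks] using hyS
        have hyT : L y ≠ Label.T := hyA
        have hyF : L y = Label.F := by
          cases h : L y
          · exact absurd h hyT
          · rfl
          · exact absurd h (hC y)
        obtain ⟨z, hz, hzT⟩ := (hL y hsink).1.mp hyF
        exact (memFIn A y).mpr ⟨z, hzT, hz⟩
    exact hall A hcong
end

section
/- Let ⟨S, F⟩ be a non-paradoxical F-system with F transitive. If x, y, z ∈ S are such that (x, y) ∈ F and (y, z) ∈ F, then x is a referential contradiction. -/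
variable {S : Type*}

/-- In a non-paradoxical F-system with F transitive, if (x,y) ∈ F and
(y,z) ∈ F then x is a referential contradiction. -/
theorem transitive_chain_refContradiction (F : S → S → Prop)
    (hnp : ¬ IsParadoxical F) (htr : Transitive F)
    (x y z : S) (hxy : F x y) (hyz : F y z) :
    RefContradiction F x := by
  intro L hL hC
  have hnsx : ¬ IsSink F x := by
    intro h; exact absurd (h ▸ hxy : y ∈ (∅ : Set S)) (Set.notMem_empty y)
  have hnsy : ¬ IsSink F y := by
    intro h; exact absurd (h ▸ hyz : z ∈ (∅ : Set S)) (Set.notMem_empty z)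
  have hx := hL x hnsx
  have hy := hL y hnsy
  rw [hx.1]
  by_contra hne
  push_neg at hne
  have hxT : L x = Label.T := by
    cases h : L x with
    | T => rfl
    | F => exact absurd (hx.1.mp h) (by push_neg; exact fun w hw => hne w hw)
    | U => exact absurd h (hC x)
  have hallF := hx.2.mp hxT
  have hyF : L y = Label.F := hallF y hxy
  obtain ⟨w, hw, hwT⟩ := hy.1.mp hyF
  have : L w = Label.F := hallF w (htr hxy hw)
  simp [hwT] at this
end

section
/- (Cook) If an F-system ⟨S, F⟩ with S nonempty is unlimited transitive (F is transitive and no node of S is a sink), then it is paradoxical, i.e. it has no classical labelling. -/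
variable {S : Type*}

/-- Cook: an unlimited transitive F-system on a nonempty S is paradoxical. -/
theorem unlimited_transitive_paradoxical (F : S → S → Prop) [Nonempty S]
    (htr : Transitive F) (hserial : ∀ x : S, ¬ IsSink F x) :
    IsParadoxical F := by
  rintro ⟨L, hL, hC⟩
  -- No node can be labelled T
  have hnoT : ∀ x, L x ≠ Label.T := by
    intro x hxT
    obtain ⟨y, hy⟩ : ∃ y, F x y := by
      have := hserial x
      simp only [IsSink, FOut, Set.eq_empty_iff_forall_notMem, Set.mem_setOf_eq,
        not_forall, not_not] at this
      exact this
    have hyF : L y = Label.F := ((hL x (hserial x)).2.mp hxT) y hy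
    obtain ⟨z, hz, hzT⟩ := ((hL y (hserial y)).1.mp hyF)
    have hzF : L z = Label.F := ((hL x (hserial x)).2.mp hxT) z (htr hy hz)
    rw [hzT] at hzF; exact Label.noConfusion hzF
  -- Hence every node is labelled F
  obtain ⟨x⟩ := ‹Nonempty S›
  have hxF : L x = Label.F := by
    cases h : L x with
    | T => exact absurd h (hnoT x)
    | F => rfl
    | U => exact absurd h (hC x)
  obtain ⟨z, hz, hzT⟩ := ((hL x (hserial x)).1.mp hxF)
  exact hnoT z hzT
end

section
/- If an F-system ⟨S, F⟩ is odd, i.e. it contains an odd core (a set of pairwise distinct sentences x₁, …, x_{2n+1} with n ≥ 0 such that (x_i, x_{i+1}) ∈ F for 1 ≤ i ≤ 2n, (x_{2n+1}, x₁) ∈ F, and each x_i has exactly one outgoing F-edge), then ⟨S, F⟩ has no conglomerate and hence is paradoxical. -/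
variable {S : Type*}

open Fin.NatCast Fin.CommRing in
/-- Auxiliary: a predicate that flips along an odd cycle yields a contradiction. -/
lemma odd_cycle_flip {n : ℕ} (P : Fin (2 * n + 1) → Prop)
    (hflip : ∀ i, P (i + 1) ↔ ¬ P i) : False := by
  have key : ∀ k : ℕ, (P ((2 * k : ℕ) : Fin (2 * n + 1)) ↔ P 0) ∧
      (P ((2 * k + 1 : ℕ) : Fin (2 * n + 1)) ↔ ¬ P 0) := by
    intro k
    induction k with
    | zero =>
      constructor
      · norm_num
      · norm_num
        have := hflip 0
        simpa using this
    | succ m ih =>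
      have h1 : ((2 * (m + 1) : ℕ) : Fin (2 * n + 1)) = ((2 * m + 1 : ℕ) : Fin (2 * n + 1)) + 1 := by
        push_cast; ring
      have h2 : ((2 * (m + 1) + 1 : ℕ) : Fin (2 * n + 1)) = ((2 * (m + 1) : ℕ) : Fin (2 * n + 1)) + 1 := by
        push_cast; ring
      constructor
      · rw [h1, hflip, ih.2, not_not]
      · rw [h2, hflip, h1, hflip, ih.2, not_not]
  have h0 : ((2 * n + 1 : ℕ) : Fin (2 * n + 1)) = 0 := by
    simp
  have := (key n).2
  rw [h0] at this
  exact iff_not_self this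

/-- An odd F-system (one containing an odd core) has no conglomerate
and hence is paradoxical. -/
theorem odd_implies_paradoxical (F : S → S → Prop)
    (h : ∃ n : ℕ, ∃ x : Fin (2 * n + 1) → S, Function.Injective x ∧
      (∀ i, F (x i) (x (i + 1))) ∧ (∀ i, ∀ y, F (x i) y → y = x (i + 1))) :
    (¬ ∃ A : Set S, Conglomerate F A) ∧ IsParadoxical F := by
  obtain ⟨n, x, hinj, hcyc, huniq⟩ := h
  have hnosink : ∀ i, ¬ IsSink F (x i) := by
    intro i hs
    have : x (i + 1) ∈ FOut F (x i) := hcyc i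
    rw [hs] at this
    exact this
  constructor
  · rintro ⟨A, h1, h2⟩
    apply odd_cycle_flip (n := n) (fun i => x i ∈ A)
    intro i
    constructor
    · intro hi1 hi
      -- x i ∈ A and x (i+1) ∈ A : then x i ∈ FInSet F A, so x i ∈ Aᶜ
      have : x i ∈ FInSet F A := by
        refine Set.mem_biUnion hi1 ?_
        exact hcyc i
      exact h1 this hi
    · intro hi
      -- x i ∉ A, non-sink, so x i ∈ FInSet F A, so some y ∈ A with F (x i) y; y = x (i+1)
      have hmem : x i ∈ Aᶜ \ sinks F Set.univ := by
        constructor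
        · exact hi
        · intro hc
          exact hnosink i hc.2
      have := h2 hmem
      obtain ⟨y, hyA, hxy⟩ := by
        simpa [FInSet, FIn] using this
      rwa [huniq i y hxy] at hyA
  · rintro ⟨L, hL, hC⟩
    apply odd_cycle_flip (n := n) (fun i => L (x i) = Label.T)
    intro i
    have hfo : FOut F (x i) = {x (i + 1)} := by
      ext y
      constructor
      · intro hy; exact huniq i y hy
      · rintro rfl; exact hcyc i
    have hiff := (hL (x i) (hnosink i)).2
    rw [hfo] at hiff
    simp only [Set.mem_singleton_iff, forall_eq] at hiff
    have hFiff : L (x (i + 1)) = Label.F ↔ ¬ L (x (i + 1)) = Label.T := by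
      constructor
      · intro hF hT; rw [hF] at hT; exact absurd hT (by simp)
      · intro hT
        cases hv : L (x (i + 1)) with
        | T => exact absurd hv hT
        | F => rfl
        | U => exact absurd hv (hC _)
    have hmain : L (x i) = Label.T ↔ ¬ L (x (i + 1)) = Label.T := hiff.trans hFiff
    have hTiff : L (x i) = Label.T ↔ ¬ L (x i) = Label.F := by
      constructor
      · intro hT hF; rw [hF] at hT; exact absurd hT (by simp)
      · intro hF
        cases hv : L (x i) with
        | T => rfl
        | F => exact absurd hv hF
        | U => exact absurd hv (hC _)
    constructor
    · intro h1 h2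
      exact (hmain.mp h2) h1
    · intro h1
      by_contra h2
      exact h1 (hmain.mpr h2)
end
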